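/- arXiv:1503.03840 — 2 statements merged into one kernel-verified Lean document; each statement's English description precedes it below -/
import Mathlib

section
/- Let a : ℝ → ℝ be a C^∞ function with a(s) = 0 for all s ≤ 0. Define A : ℝ³ → ℝ by A(x,y,z) = a(x²+y²−z²)/(x²+y²) if x²+y² ≠ 0 and A(x,y,z) = 0 if x²+y² = 0. Then A is C^∞ on all of ℝ³. Consequently the functions f(x,y,z) = x·A(x,y,z) and g(x,y,z) = −y·A(x,y,z) are C^∞ on ℝ³. -/
noncomputable section

/-- The quadratic form `x² + y² − z²`. -/
def Qf (p : Fin 3 → ℝ) : ℝ := (p 0) ^ 2 + (p 1) ^ 2 - (p 2) ^ 2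

/-- `A(x,y,z) = a(x²+y²−z²)/(x²+y²)` when `x²+y² ≠ 0`, and `0` when `x²+y² = 0`. -/
def Afun (a : ℝ → ℝ) (p : Fin 3 → ℝ) : ℝ :=
  if (p 0) ^ 2 + (p 1) ^ 2 = 0 then 0 else a (Qf p) / ((p 0) ^ 2 + (p 1) ^ 2)

/-- `f = x·A`. -/
def ff (a : ℝ → ℝ) (p : Fin 3 → ℝ) : ℝ := p 0 * Afun a p

/-- `g = −y·A`. -/
def gf (a : ℝ → ℝ) (p : Fin 3 → ℝ) : ℝ := -p 1 * Afun a p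

/-! Write `A(x, y, z) = G₁(x² + y², z)` with `Gₖ(u, v) = a(u − v²) / uᵏ`. The partial
derivatives of `Gₖ` are combinations of `Gₖ` built from `a'` and of `Gₖ₊₁` built from `a`, and
`a'` is again smooth and vanishes on `(−∞, 0]`; so, by induction on the order of smoothness, it
suffices to show that each `Gₖ` is differentiable with that derivative. Off the line `u = 0` this
is calculus. On it, `Gₖ` vanishes, and since all derivatives of `a` vanish at `0`, Taylor's theorem
gives `a(s) = o(sⁿ)`; as `0 < u − v² ≤ u` wherever `a(u − v²) ≠ 0`, this yields `|Gₖ(u, v)| ≤ u²`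
near the line, so the derivative there is `0`. -/

open Topology Set Asymptotics
open scoped ContDiff

structure SmoothVanishingOnNonpos (a : ℝ → ℝ) : Prop where
  contDiff : ContDiff ℝ ∞ a
  eq_zero : ∀ s ≤ 0, a s = 0

namespace SmoothVanishingOnNonpos

variable {a : ℝ → ℝ}

theorem deriv (h : SmoothVanishingOnNonpos a) : SmoothVanishingOnNonpos (deriv a) where
  contDiff := (contDiff_infty_iff_deriv.mp h.contDiff).2
  eq_zero s hs := by
    have hzero : HasDerivWithinAt a 0 (Iic 0) s :=
      (hasDerivWithinAt_const s _ 0).congr (fun t ht => h.eq_zero t ht) (h.eq_zero s hs)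
    have hderiv := ((h.contDiff.differentiable (by simp)) s).hasDerivAt
    exact (uniqueDiffOn_Iic 0 s hs).eq_deriv _ hderiv.hasDerivWithinAt hzero

theorem iterate_deriv (h : SmoothVanishingOnNonpos a) (k : ℕ) :
    SmoothVanishingOnNonpos (_root_.deriv^[k] a) := by
  induction k with
  | zero => exact h
  | succ k ih => rw [Function.iterate_succ_apply']; exact ih.deriv

theorem isLittleO_pow (h : SmoothVanishingOnNonpos a) (n : ℕ) : a =o[𝓝 0] (· ^ n) := by
  have hTaylor : taylorWithinEval a n univ 0 = 0 := by
    ext x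
    simp [taylor_within_apply, iteratedDerivWithin_univ, iteratedDeriv_eq_iterate,
      (h.iterate_deriv _).eq_zero 0 le_rfl]
  have hn : ContDiff ℝ n a := h.contDiff.of_le (mod_cast le_top)
  simpa [hTaylor] using taylor_isLittleO_univ (x₀ := 0) hn

theorem eventually_abs_le_pow (h : SmoothVanishingOnNonpos a) (n : ℕ) :
    ∀ᶠ t in 𝓝 0, |a t| ≤ |t| ^ n := by
  simpa using (h.isLittleO_pow n).bound one_pos

end SmoothVanishingOnNonpos

def parabolicQuot (k : ℕ) (a : ℝ → ℝ) (p : ℝ × ℝ) : ℝ := a (p.1 - p.2 ^ 2) / p.1 ^ k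

section parabolicQuot

variable {a : ℝ → ℝ}

theorem parabolicQuot_eq_zero_of_fst_eq_zero (h : SmoothVanishingOnNonpos a) (k : ℕ)
    {p : ℝ × ℝ} (hp : p.1 = 0) : parabolicQuot k a p = 0 := by
  simp [parabolicQuot, hp, h.eq_zero (-p.2 ^ 2) (neg_nonpos.2 (sq_nonneg _))]

theorem eventually_abs_parabolicQuot_le_pow (h : SmoothVanishingOnNonpos a) (k n : ℕ)
    {p : ℝ × ℝ} (hp : p.1 = 0) : ∀ᶠ q in 𝓝 p, |parabolicQuot k a q| ≤ |q.1| ^ n := by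
  obtain ⟨δ, hδ, ha⟩ := Metric.eventually_nhds_iff.1 (h.eventually_abs_le_pow (k + n))
  have hfst : ∀ᶠ q : ℝ × ℝ in 𝓝 p, dist q.1 0 < δ :=
    (hp ▸ continuous_fst.tendsto p) (Metric.ball_mem_nhds 0 hδ)
  filter_upwards [hfst] with q hqδ
  set t := q.1 - q.2 ^ 2 with ht_def
  rcases le_or_gt t 0 with ht | ht
  · simp [parabolicQuot, ← ht_def, h.eq_zero t ht]
  have htq : t ≤ q.1 := by nlinarith [sq_nonneg q.2]
  have hq : 0 < q.1 := ht.trans_le htq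
  have hqδ' : q.1 < δ := by simpa [abs_of_pos hq] using hqδ
  rw [parabolicQuot, ← ht_def, abs_div, abs_pow, div_le_iff₀ (by positivity), ← pow_add, add_comm n]
  calc |a t| ≤ |t| ^ (k + n) := ha (by simpa [abs_of_pos ht] using htq.trans_lt hqδ')
    _ ≤ |q.1| ^ (k + n) :=
      pow_le_pow_left₀ (abs_nonneg t) (by rwa [abs_of_pos ht, abs_of_pos hq]) _

theorem hasFDerivAt_parabolicQuot_of_fst_eq_zero (h : SmoothVanishingOnNonpos a) (k : ℕ)
    {p : ℝ × ℝ} (hp : p.1 = 0) : HasFDerivAt (parabolicQuot k a) (0 : ℝ × ℝ →L[ℝ] ℝ) p := by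
  rw [hasFDerivAt_iff_isLittleO]
  simp only [parabolicQuot_eq_zero_of_fst_eq_zero h k hp, sub_zero, zero_apply]
  have hO : parabolicQuot k a =O[𝓝 p] fun q => ‖q - p‖ ^ 2 := by
    refine IsBigO.of_bound 1 ?_
    filter_upwards [eventually_abs_parabolicQuot_le_pow h k 2 hp] with q hq
    have hfst : |q.1| ≤ ‖q - p‖ := by simpa [hp] using norm_fst_le (q - p)
    simpa using hq.trans (pow_le_pow_left₀ (abs_nonneg _) hfst 2)
  exact hO.trans_isLittleO (isLittleO_pow_sub_sub p one_lt_two)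

theorem hasFDerivAt_parabolicQuot (h : SmoothVanishingOnNonpos a) (k : ℕ) (p : ℝ × ℝ) :
    HasFDerivAt (parabolicQuot k a)
      ((parabolicQuot k (deriv a) p - k * parabolicQuot (k + 1) a p) •
          ContinuousLinearMap.fst ℝ ℝ ℝ -
        (2 * p.2 * parabolicQuot k (deriv a) p) • ContinuousLinearMap.snd ℝ ℝ ℝ) p := by
  rcases eq_or_ne p.1 0 with hp | hp
  · simpa [parabolicQuot_eq_zero_of_fst_eq_zero h _ hp,
      parabolicQuot_eq_zero_of_fst_eq_zero h.deriv k hp]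
      using hasFDerivAt_parabolicQuot_of_fst_eq_zero h k hp
  have hinner : HasFDerivAt (fun q : ℝ × ℝ => q.1 - q.2 ^ 2)
      (ContinuousLinearMap.fst ℝ ℝ ℝ - (2 * p.2) • ContinuousLinearMap.snd ℝ ℝ ℝ) p := by
    refine ((hasFDerivAt_fst (𝕜 := ℝ)).sub ((hasFDerivAt_snd (𝕜 := ℝ)).pow 2)).congr_fderiv ?_
    simp [nsmul_eq_mul]
  have hnum := ((h.contDiff.differentiable (by simp)) _).hasDerivAt.comp_hasFDerivAt p hinner
  have hden := (hasDerivAt_zpow (-k) p.1 (Or.inl hp)).comp_hasFDerivAt p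
    (hasFDerivAt_fst (𝕜 := ℝ))
  have hquot : parabolicQuot k a = fun q => a (q.1 - q.2 ^ 2) * q.1 ^ (-k : ℤ) := by
    ext q; simp [parabolicQuot, div_eq_mul_inv]
  have hzpow : p.1 ^ (-(k : ℤ) - 1) = (p.1 ^ (k + 1))⁻¹ := by
    rw [← zpow_natCast, ← zpow_neg]; push_cast; ring_nf
  rw [hquot]
  refine (hnum.mul hden).congr_fderiv ?_
  ext <;> simp [parabolicQuot, hzpow] <;> ring

theorem contDiff_parabolicQuot (h : SmoothVanishingOnNonpos a) (k : ℕ) :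
    ContDiff ℝ ∞ (parabolicQuot k a) := by
  refine contDiff_infty.2 fun n => ?_
  induction n generalizing a k with
  | zero => exact contDiff_zero.2 <| continuous_iff_continuousAt.2 fun p =>
      (hasFDerivAt_parabolicQuot h k p).continuousAt
  | succ n ih =>
    refine contDiff_succ_iff_hasFDerivAt.2 ⟨_, ?_, hasFDerivAt_parabolicQuot h k⟩
    exact (((ih h.deriv k).sub (contDiff_const.mul (ih h (k + 1)))).smul contDiff_const).sub
      (((contDiff_const.mul contDiff_snd).mul (ih h.deriv k)).smul contDiff_const)

end parabolicQuot

theorem Afun_eq_parabolicQuot_comp (a : ℝ → ℝ) :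
    Afun a = parabolicQuot 1 a ∘ fun p => (p 0 ^ 2 + p 1 ^ 2, p 2) := by
  ext p
  by_cases hp : p 0 ^ 2 + p 1 ^ 2 = 0 <;> simp [Afun, parabolicQuot, Qf, hp]

/-- If `a : ℝ → ℝ` is `C^∞` and vanishes on `(−∞,0]`, then the Cairns–Ghys coefficient
`A(x,y,z) = a(x²+y²−z²)/(x²+y²)` (extended by `0` where `x²+y² = 0`) is `C^∞` on all of
`ℝ³`, and consequently so are `f = x·A` and `g = −y·A`. -/
theorem cairnsGhys_coefficients_smooth
    (a : ℝ → ℝ) (ha : ContDiff ℝ (⊤ : ℕ∞) a) (ha0 : ∀ s : ℝ, s ≤ 0 → a s = 0) :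
    ContDiff ℝ (⊤ : ℕ∞) (Afun a) ∧
    ContDiff ℝ (⊤ : ℕ∞) (ff a) ∧
    ContDiff ℝ (⊤ : ℕ∞) (gf a) := by
  have hcoord (i : Fin 3) : ContDiff ℝ ∞ fun p : Fin 3 → ℝ => p i := contDiff_apply ℝ ℝ i
  have hA : ContDiff ℝ ∞ (Afun a) := by
    rw [Afun_eq_parabolicQuot_comp]
    exact (contDiff_parabolicQuot ⟨ha, ha0⟩ 1).comp
      ((((hcoord 0).pow 2).add ((hcoord 1).pow 2)).prodMk (hcoord 2))
  exact ⟨hA, (hcoord 0).mul hA, (hcoord 1).neg.mul hA⟩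
end
end

section
/- Let a : ℝ → ℝ satisfy a(s) = 0 for all s ≤ 0 and |a(s)| ≤ K for all s ∈ ℝ, for some constant K ≥ 0. With f(x,y,z) = x·A(x,y,z) and g(x,y,z) = −y·A(x,y,z) as in the Cairns–Ghys perturbation, for every p = (x,y,z) ∈ ℝ³ one has ‖f(p)·p‖ ≤ √2·K and ‖g(p)·p‖ ≤ √2·K, where ‖·‖ is the Euclidean norm; that is, the perturbations f·R and g·R of the linear vector fields are uniformly bounded on ℝ³. -/
noncomputable section

/-- The radial vector field `R(x,y,z) = (x,y,z)`. -/
def Rf (p : Fin 3 → ℝ) : Fin 3 → ℝ := p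
lemma cg_aux (a : ℝ → ℝ) (K : ℝ) (hK : 0 ≤ K)
    (ha0 : ∀ s : ℝ, s ≤ 0 → a s = 0) (haK : ∀ s : ℝ, |a s| ≤ K)
    (p : Fin 3 → ℝ) (c : ℝ) (hc : c ^ 2 ≤ (p 0) ^ 2 + (p 1) ^ 2) :
    ‖(WithLp.equiv 2 (Fin 3 → ℝ)).symm ((c * Afun a p) • Rf p)‖ ≤ Real.sqrt 2 * K := by
  have hsK : 0 ≤ Real.sqrt 2 * K := mul_nonneg (Real.sqrt_nonneg 2) hK
  by_cases h0 : (p 0) ^ 2 + (p 1) ^ 2 = 0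
  · simp [Afun, h0, hsK]
  have hspos : 0 < (p 0) ^ 2 + (p 1) ^ 2 := lt_of_le_of_ne (by positivity) (Ne.symm h0)
  by_cases hq : Qf p ≤ 0
  · simp [Afun, h0, ha0 _ hq, hsK]
  push_neg at hq
  have hz : (p 2) ^ 2 < (p 0) ^ 2 + (p 1) ^ 2 := by
    have := hq; unfold Qf at this; linarith
  have hnorm : ‖(WithLp.equiv 2 (Fin 3 → ℝ)).symm (Rf p)‖
      ≤ Real.sqrt 2 * Real.sqrt ((p 0) ^ 2 + (p 1) ^ 2) := by
    rw [EuclideanSpace.norm_eq, ← Real.sqrt_mul (by norm_num : (0:ℝ) ≤ 2)]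
    apply Real.sqrt_le_sqrt
    simp [Fin.sum_univ_three, Rf, sq_abs]
    nlinarith
  have heq : (WithLp.equiv 2 (Fin 3 → ℝ)).symm ((c * Afun a p) • Rf p)
      = (c * Afun a p) • (WithLp.equiv 2 (Fin 3 → ℝ)).symm (Rf p) := rfl
  rw [heq, norm_smul]
  have hA : |Afun a p| ≤ K / ((p 0) ^ 2 + (p 1) ^ 2) := by
    rw [Afun, if_neg h0, abs_div, abs_of_pos hspos]
    exact (div_le_div_iff_of_pos_right hspos).mpr (haK _)
  have hcabs : |c| ≤ Real.sqrt ((p 0) ^ 2 + (p 1) ^ 2) := by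
    rw [← Real.sqrt_sq_eq_abs]
    exact Real.sqrt_le_sqrt hc
  have h1 : ‖c * Afun a p‖ ≤ Real.sqrt ((p 0) ^ 2 + (p 1) ^ 2) * (K / ((p 0) ^ 2 + (p 1) ^ 2)) := by
    rw [Real.norm_eq_abs, abs_mul]
    exact mul_le_mul hcabs hA (abs_nonneg _) (Real.sqrt_nonneg _)
  calc ‖c * Afun a p‖ * ‖(WithLp.equiv 2 (Fin 3 → ℝ)).symm (Rf p)‖
      ≤ (Real.sqrt ((p 0) ^ 2 + (p 1) ^ 2) * (K / ((p 0) ^ 2 + (p 1) ^ 2))) *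
        (Real.sqrt 2 * Real.sqrt ((p 0) ^ 2 + (p 1) ^ 2)) :=
        mul_le_mul h1 hnorm (norm_nonneg _) (by positivity)
    _ = Real.sqrt 2 * K * ((Real.sqrt ((p 0) ^ 2 + (p 1) ^ 2)) ^ 2 / ((p 0) ^ 2 + (p 1) ^ 2)) := by
        ring
    _ = Real.sqrt 2 * K := by
        rw [Real.sq_sqrt hspos.le, div_self h0]; ring

/-- If `a` vanishes on `(−∞,0]` and `|a| ≤ K`, then the Cairns–Ghys perturbations
`f·R` and `g·R` are uniformly bounded on `ℝ³`: `‖f(p)·p‖ ≤ √2·K` and `‖g(p)·p‖ ≤ √2·K`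
for the Euclidean norm on `ℝ³`. -/
theorem cairnsGhys_perturbation_bounded
    (a : ℝ → ℝ) (K : ℝ) (hK : 0 ≤ K)
    (ha0 : ∀ s : ℝ, s ≤ 0 → a s = 0) (haK : ∀ s : ℝ, |a s| ≤ K) :
    ∀ p : Fin 3 → ℝ,
      ‖(WithLp.equiv 2 (Fin 3 → ℝ)).symm (ff a p • Rf p)‖ ≤ Real.sqrt 2 * K ∧
      ‖(WithLp.equiv 2 (Fin 3 → ℝ)).symm (gf a p • Rf p)‖ ≤ Real.sqrt 2 * K := by
  intro p
  constructor
  · have := cg_aux a K hK ha0 haK p (p 0) (by nlinarith [sq_nonneg (p 1)])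
    simpa [ff] using this
  · have := cg_aux a K hK ha0 haK p (-p 1) (by nlinarith [sq_nonneg (p 0)])
    simpa [gf] using this
end
end
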